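/- arXiv:1905.05451 — 2 statements merged into one kernel-verified Lean document; each statement's English description precedes it below -/
import Mathlib

section
/- Let S be a finite set, let 0 ≤ a < b ≤ T, and let Q : S × S → ℝ satisfy Q(x,y) > 0 for all x ≠ y. Suppose σ : S → ℝ → ℝ is positive and satisfies the backward equation with rates Q on [a,b], and p : S → ℝ → ℝ satisfies the master equation on [a,b] with time-dependent rates λ(x,y,t) > 0 (for x ≠ y), with all relevant functions continuously differentiable in t on [a,b]. Define Q̃(x,y,t) = (σ(y,t)/σ(x,t)) Q(x,y). Then ∫_a^b ∑_{x} p(x,t) ∑_{y ≠ x} [ Q̃(x,y,t) − λ(x,y,t) + λ(x,y,t) log( λ(x,y,t)/Q̃(x,y,t) ) ] dt = ∫_a^b ∑_{x} p(x,t) ∑_{y ≠ x} [ Q(x,y) − λ(x,y,t) + λ(x,y,t) log( λ(x,y,t)/Q(x,y) ) ] dt − ( ∑_{x} p(x,b) log σ(x,b) − ∑_{x} p(x,a) log σ(x,a) ). -/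
open Finset

/-!
With `F t = ∑ₓ p(x,t) log σ(x,t)`, the two KL rates differ at every time by exactly `F' t`, so the
theorem is the fundamental theorem of calculus for `F`. Replacing `Q` by its Doob transform
`Q̃ = (σ_y / σ_x) Q` changes `∑ p_x λ_xy log (λ_xy / Q_xy)` by the pairing of the flux `p_x λ_xy`
with the discrete gradient of `log σ`, which summation by parts and the master equation turn into
`∑ ṗ_x log σ_x`; it changes `∑ p_x Q_xy` by `∑ p_x σ̇_x / σ_x`, by the backward equation.
-/

noncomputable def klRate (r₁ r₂ : ℝ) : ℝ :=
  r₂ - r₁ + r₁ * Real.log (r₁ / r₂)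

theorem klRate_sub_klRate_mul {l q s : ℝ} (hl : l ≠ 0) (hq : q ≠ 0) (hs : s ≠ 0) :
    klRate l q - klRate l (s * q) = q - s * q + l * Real.log s := by
  rw [klRate, klRate, Real.log_div hl hq, Real.log_div hl (mul_ne_zero hs hq),
    Real.log_mul hs hq]
  ring

section Rates

variable {S : Type*} [Fintype S] [DecidableEq S]

theorem sum_sum_filter_ne_comm {M : Type*} [AddCommMonoid M] (f : S → S → M) :
    ∑ x : S, ∑ y ∈ univ.filter (fun y => y ≠ x), f x y
      = ∑ x : S, ∑ y ∈ univ.filter (fun y => y ≠ x), f y x := by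
  simp only [sum_filter]
  rw [sum_comm]
  refine sum_congr rfl fun x _ => sum_congr rfl fun y _ => ?_
  by_cases h : x = y
  · simp [h]
  · simp [h, Ne.symm h]

theorem sum_sum_filter_ne_mul_sub {R : Type*} [CommRing R] (w : S → S → R) (g : S → R) :
    ∑ x : S, ∑ y ∈ univ.filter (fun y => y ≠ x), w x y * (g y - g x)
      = ∑ x : S, ((∑ y ∈ univ.filter (fun y => y ≠ x), w y x)
          - ∑ y ∈ univ.filter (fun y => y ≠ x), w x y) * g x := by
  simp only [mul_sub, sum_sub_distrib, sub_mul, sum_mul]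
  rw [sum_sum_filter_ne_comm fun x y => w x y * g y]

noncomputable def pathKLRate (p : S → ℝ) (R₁ R₂ : S → S → ℝ) : ℝ :=
  ∑ x : S, p x * ∑ y ∈ univ.filter (fun y => y ≠ x), klRate (R₁ x y) (R₂ x y)

def masterDrift (l : S → S → ℝ) (p : S → ℝ) (x : S) : ℝ :=
  (∑ y ∈ univ.filter (fun y => y ≠ x), l y x * p y)
    - ∑ y ∈ univ.filter (fun y => y ≠ x), l x y * p x

def backwardDrift (Q : S → S → ℝ) (σ : S → ℝ) (x : S) : ℝ :=
  -∑ y ∈ univ.filter (fun y => y ≠ x), Q x y * (σ y - σ x)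

theorem pathKLRate_sub_pathKLRate_doob (p σ : S → ℝ) (l Q : S → S → ℝ)
    (hσ : ∀ x, 0 < σ x) (hQ : ∀ x y, x ≠ y → 0 < Q x y) (hl : ∀ x y, x ≠ y → 0 < l x y) :
    pathKLRate p l Q - pathKLRate p l (fun x y => σ y / σ x * Q x y)
      = ∑ x : S, (masterDrift l p x * Real.log (σ x) + p x * (backwardDrift Q σ x / σ x)) := by
  have hterm : ∀ x, ∀ y ∈ univ.filter (fun y => y ≠ x),
      p x * (klRate (l x y) (Q x y) - klRate (l x y) (σ y / σ x * Q x y))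
        = l x y * p x * (Real.log (σ y) - Real.log (σ x)) + p x * (Q x y - σ y / σ x * Q x y) := by
    intro x y hy
    have hxy : x ≠ y := (mem_filter.mp hy).2.symm
    have hs : σ y / σ x ≠ 0 := (div_pos (hσ y) (hσ x)).ne'
    rw [klRate_sub_klRate_mul (hl x y hxy).ne' (hQ x y hxy).ne' hs,
      Real.log_div (hσ y).ne' (hσ x).ne']
    ring
  have hbackward : ∀ x, p x * (backwardDrift Q σ x / σ x)
      = ∑ y ∈ univ.filter (fun y => y ≠ x), p x * (Q x y - σ y / σ x * Q x y) := by
    intro x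
    rw [backwardDrift, ← sum_neg_distrib, sum_div, mul_sum]
    refine sum_congr rfl fun y _ => ?_
    field_simp [(hσ x).ne']
    ring
  calc pathKLRate p l Q - pathKLRate p l (fun x y => σ y / σ x * Q x y)
      = ∑ x : S, ∑ y ∈ univ.filter (fun y => y ≠ x),
          (l x y * p x * (Real.log (σ y) - Real.log (σ x))
            + p x * (Q x y - σ y / σ x * Q x y)) := by
        simp only [pathKLRate, ← sum_sub_distrib, ← mul_sub, mul_sum]
        exact sum_congr rfl fun x _ => sum_congr rfl (hterm x)
    _ = _ := by
        rw [sum_congr rfl fun x _ => sum_add_distrib, sum_add_distrib,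
          sum_sum_filter_ne_mul_sub fun x y => l x y * p x, ← sum_add_distrib]
        simp only [hbackward, masterDrift]

end Rates

theorem hasDerivAt_sum_mul_log {S : Type*} [Fintype S] {p σ : S → ℝ → ℝ} {p' σ' : S → ℝ}
    {t : ℝ} (hp : ∀ x, HasDerivAt (p x) (p' x) t) (hσ : ∀ x, HasDerivAt (σ x) (σ' x) t)
    (hσ0 : ∀ x, σ x t ≠ 0) :
    HasDerivAt (fun t => ∑ x : S, p x t * Real.log (σ x t))
      (∑ x : S, (p' x * Real.log (σ x t) + p x t * (σ' x / σ x t))) t :=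
  HasDerivAt.fun_sum fun x _ => (hp x).mul ((hσ x).log (hσ0 x))

section Continuity

variable {S : Type*} [Fintype S] [DecidableEq S] {s : Set ℝ}

theorem continuousOn_pathKLRate {p : S → ℝ → ℝ} {R₁ R₂ : S → S → ℝ → ℝ}
    (hp : ∀ x, ContinuousOn (p x) s) (hR₁ : ∀ x y, ContinuousOn (R₁ x y) s)
    (hR₂ : ∀ x y, ContinuousOn (R₂ x y) s) (hR₁0 : ∀ x y, x ≠ y → ∀ t ∈ s, R₁ x y t ≠ 0)
    (hR₂0 : ∀ x y, x ≠ y → ∀ t ∈ s, R₂ x y t ≠ 0) :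
    ContinuousOn (fun t => pathKLRate (p · t) (R₁ · · t) (R₂ · · t)) s := by
  unfold pathKLRate
  refine continuousOn_finsetSum _ fun x _ => (hp x).mul <|
    continuousOn_finsetSum _ fun y hy => ?_
  have hxy : x ≠ y := (mem_filter.mp hy).2.symm
  exact ((hR₂ x y).sub (hR₁ x y)).add <| (hR₁ x y).mul <| ((hR₁ x y).div (hR₂ x y)
    (hR₂0 x y hxy)).log fun t ht => div_ne_zero (hR₁0 x y hxy t ht) (hR₂0 x y hxy t ht)

theorem continuousOn_sum_masterDrift_mul_log {p σ : S → ℝ → ℝ} {l : S → S → ℝ → ℝ}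
    (Q : S → S → ℝ) (hp : ∀ x, ContinuousOn (p x) s) (hσ : ∀ x, ContinuousOn (σ x) s)
    (hl : ∀ x y, ContinuousOn (l x y) s) (hσ0 : ∀ x, ∀ t ∈ s, σ x t ≠ 0) :
    ContinuousOn (fun t => ∑ x : S, (masterDrift (l · · t) (p · t) x * Real.log (σ x t)
      + p x t * (backwardDrift Q (σ · t) x / σ x t))) s := by
  refine continuousOn_finsetSum _ fun x _ => ContinuousOn.add ?_ ?_
  · exact ((continuousOn_finsetSum _ fun y _ => (hl y x).mul (hp y)).sub
      (continuousOn_finsetSum _ fun y _ => (hl x y).mul (hp x))).mul ((hσ x).log (hσ0 x))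
  · exact (hp x).mul <| ((continuousOn_finsetSum _ fun y _ =>
      continuousOn_const.mul ((hσ y).sub (hσ x))).neg).div (hσ x) (hσ0 x)

end Continuity

theorem kl_decomposition_integral_form_general
    {S : Type*} [Fintype S] [DecidableEq S]
    (a b : ℝ) (hab : a < b)
    (Q : S → S → ℝ) (hQ : ∀ x y : S, x ≠ y → 0 < Q x y)
    (σ p : S → ℝ → ℝ) (lam : S → S → ℝ → ℝ)
    (hσpos : ∀ x : S, ∀ t ∈ Set.Icc a b, 0 < σ x t)
    (hlampos : ∀ x y : S, x ≠ y → ∀ t ∈ Set.Icc a b, 0 < lam x y t)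
    (hlamC1 : ∀ x y : S, ContDiffOn ℝ 1 (lam x y) (Set.Icc a b))
    (hbackward : ∀ x : S, ∀ t ∈ Set.Icc a b,
      HasDerivAt (σ x)
        (-∑ y ∈ univ.filter (fun y => y ≠ x), Q x y * (σ y t - σ x t)) t)
    (hmaster : ∀ x : S, ∀ t ∈ Set.Icc a b,
      HasDerivAt (p x)
        ((∑ y ∈ univ.filter (fun y => y ≠ x), lam y x t * p y t)
          - ∑ y ∈ univ.filter (fun y => y ≠ x), lam x y t * p x t) t)
    (Qt : S → S → ℝ → ℝ)
    (hQt : ∀ x y : S, ∀ t : ℝ, Qt x y t = (σ y t / σ x t) * Q x y) :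
    (∫ t in a..b, ∑ x : S, p x t * ∑ y ∈ univ.filter (fun y => y ≠ x),
        (Qt x y t - lam x y t + lam x y t * Real.log (lam x y t / Qt x y t)))
      = (∫ t in a..b, ∑ x : S, p x t * ∑ y ∈ univ.filter (fun y => y ≠ x),
          (Q x y - lam x y t + lam x y t * Real.log (lam x y t / Q x y)))
        - ((∑ x : S, p x b * Real.log (σ x b))
            - ∑ x : S, p x a * Real.log (σ x a)) := by
  have hIcc : Set.uIcc a b = Set.Icc a b := Set.uIcc_of_le hab.le
  have hσ0 : ∀ x, ∀ t ∈ Set.Icc a b, σ x t ≠ 0 := fun x t ht => (hσpos x t ht).ne'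
  have hσc : ∀ x, ContinuousOn (σ x) (Set.Icc a b) := fun x t ht =>
    (hbackward x t ht).continuousAt.continuousWithinAt
  have hpc : ∀ x, ContinuousOn (p x) (Set.Icc a b) := fun x t ht =>
    (hmaster x t ht).continuousAt.continuousWithinAt
  have hlamc : ∀ x y, ContinuousOn (lam x y) (Set.Icc a b) := fun x y =>
    (hlamC1 x y).continuousOn
  set G : ℝ → ℝ := fun t => ∑ x : S, (masterDrift (lam · · t) (p · t) x * Real.log (σ x t)
    + p x t * (backwardDrift Q (σ · t) x / σ x t))
  have hF : ∀ t ∈ Set.uIcc a b,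
      HasDerivAt (fun t => ∑ x : S, p x t * Real.log (σ x t)) (G t) t := fun t ht => by
      rw [hIcc] at ht
      exact hasDerivAt_sum_mul_log (hmaster · t ht) (hbackward · t ht) (hσ0 · t ht)
  have hGint : IntervalIntegrable G MeasureTheory.volume a b :=
    ContinuousOn.intervalIntegrable <| hIcc ▸
      continuousOn_sum_masterDrift_mul_log Q hpc hσc hlamc hσ0
  have hpriorint : IntervalIntegrable (fun t => pathKLRate (p · t) (lam · · t) Q)
      MeasureTheory.volume a b :=
    ContinuousOn.intervalIntegrable <| hIcc ▸ continuousOn_pathKLRate (R₂ := fun x y _ => Q x y)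
      hpc hlamc (fun _ _ => continuousOn_const) (fun x y hxy t ht => (hlampos x y hxy t ht).ne')
      (fun x y hxy _ _ => (hQ x y hxy).ne')
  calc (∫ t in a..b, pathKLRate (p · t) (lam · · t) (Qt · · t))
      = ∫ t in a..b, (pathKLRate (p · t) (lam · · t) Q - G t) := by
        refine intervalIntegral.integral_congr fun t ht => ?_
        rw [hIcc] at ht
        have hdoob := pathKLRate_sub_pathKLRate_doob (p · t) (σ · t) (lam · · t) Q
          (hσpos · t ht) hQ (fun x y hxy => hlampos x y hxy t ht)
        have hQt' : (Qt · · t) = fun x y => σ y t / σ x t * Q x y := funext₂ fun x y => hQt x y t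
        rw [hQt']
        linarith
    _ = _ := by
        rw [intervalIntegral.integral_sub hpriorint hGint,
          intervalIntegral.integral_eq_sub_of_hasDerivAt hF hGint]
        rfl

/-- Integral form (over an interval `[a,b]` between consecutive observations) of
the KL-divergence decomposition between an approximating jump process with rates
`λ`, the prior process with rates `Q`, and the posterior process with rates
`Q̃(x,y,t) = (σ(y,t)/σ(x,t)) Q(x,y)`. -/
theorem kl_decomposition_integral_form
    {S : Type*} [Fintype S] [DecidableEq S]
    (T a b : ℝ) (ha : 0 ≤ a) (hab : a < b) (hbT : b ≤ T)
    (Q : S → S → ℝ) (hQ : ∀ x y : S, x ≠ y → 0 < Q x y)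
    (σ p : S → ℝ → ℝ) (lam : S → S → ℝ → ℝ)
    (hσpos : ∀ x : S, ∀ t ∈ Set.Icc a b, 0 < σ x t)
    (hlampos : ∀ x y : S, x ≠ y → ∀ t ∈ Set.Icc a b, 0 < lam x y t)
    (hσC1 : ∀ x : S, ContDiffOn ℝ 1 (σ x) (Set.Icc a b))
    (hpC1 : ∀ x : S, ContDiffOn ℝ 1 (p x) (Set.Icc a b))
    (hlamC1 : ∀ x y : S, ContDiffOn ℝ 1 (lam x y) (Set.Icc a b))
    (hbackward : ∀ x : S, ∀ t ∈ Set.Icc a b,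
      HasDerivAt (σ x)
        (-∑ y ∈ univ.filter (fun y => y ≠ x), Q x y * (σ y t - σ x t)) t)
    (hmaster : ∀ x : S, ∀ t ∈ Set.Icc a b,
      HasDerivAt (p x)
        ((∑ y ∈ univ.filter (fun y => y ≠ x), lam y x t * p y t)
          - ∑ y ∈ univ.filter (fun y => y ≠ x), lam x y t * p x t) t)
    (Qt : S → S → ℝ → ℝ)
    (hQt : ∀ x y : S, ∀ t : ℝ, Qt x y t = (σ y t / σ x t) * Q x y) :
    (∫ t in a..b, ∑ x : S, p x t * ∑ y ∈ univ.filter (fun y => y ≠ x),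
        (Qt x y t - lam x y t + lam x y t * Real.log (lam x y t / Qt x y t)))
      = (∫ t in a..b, ∑ x : S, p x t * ∑ y ∈ univ.filter (fun y => y ≠ x),
          (Q x y - lam x y t + lam x y t * Real.log (lam x y t / Q x y)))
        - ((∑ x : S, p x b * Real.log (σ x b))
            - ∑ x : S, p x a * Real.log (σ x a)) :=
  kl_decomposition_integral_form_general a b hab Q hQ σ p lam hσpos hlampos hlamC1 hbackward hmaster
    Qt hQt
end

section
/- Let c₁, c₂ > 0 and T > 0. Define σ : ℕ → ℝ → ℝ by σ(x, t) = exp( −(c₁/c₂) · (1 − exp(−c₂(T − t))) ) · (1 − exp(−c₂(T − t)))^x. Then: (i) for every x ∈ ℕ and every t < T, ∂_t σ(x,t) = − c₁ · ( σ(x+1, t) − σ(x, t) ) − c₂ · x · ( σ(x−1, t) − σ(x, t) ), where for x = 0 the second term vanishes since its coefficient c₂·x is zero; (ii) σ(0, T) = 1 and σ(x, T) = 0 for all x ≥ 1; (iii) for every x ∈ ℕ and t < T, σ(x+1, t)/σ(x, t) = 1 − exp(−c₂(T − t)). -/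
/-!
Write `u(t) = 1 - e^{-c₂(T-t)}`, so that `σ(x,t) = e^{-(c₁/c₂) u} u^x`. The function `u`
solves `u' = c₂ (u - 1)` with `u(T) = 0`, and for any such `u` the product rule turns the
derivative `e^{-(c₁/c₂) u} (-(c₁/c₂) u^x + x u^{x-1}) u'` into the right-hand side of the
backward equation. The ratio `σ(x+1,t)/σ(x,t)` is `u(t)`, which is positive for `t < T`.
-/

open Real

noncomputable section

def backwardProfile (a u : ℝ) (x : ℕ) : ℝ :=
  exp (-a * u) * u ^ x

theorem backwardProfile_succ (a u : ℝ) (x : ℕ) :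
    backwardProfile a u (x + 1) = backwardProfile a u x * u := by
  simp only [backwardProfile, pow_succ, mul_assoc]

theorem backwardProfile_ne_zero (a : ℝ) {u : ℝ} (hu : u ≠ 0) (x : ℕ) :
    backwardProfile a u x ≠ 0 :=
  mul_ne_zero (exp_ne_zero _) (pow_ne_zero x hu)

theorem backwardProfile_succ_div (a : ℝ) {u : ℝ} (hu : u ≠ 0) (x : ℕ) :
    backwardProfile a u (x + 1) / backwardProfile a u x = u := by
  rw [backwardProfile_succ, mul_div_cancel_left₀ _ (backwardProfile_ne_zero a hu x)]

@[simp]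
theorem backwardProfile_zero_zero (a : ℝ) : backwardProfile a 0 0 = 1 := by
  simp [backwardProfile]

theorem backwardProfile_zero_of_ne_zero (a : ℝ) {x : ℕ} (hx : x ≠ 0) :
    backwardProfile a 0 x = 0 := by
  simp [backwardProfile, zero_pow hx]

theorem hasDerivAt_backwardProfile {c₁ c₂ t : ℝ} (hc₂ : c₂ ≠ 0) {u : ℝ → ℝ}
    (hu : HasDerivAt u (c₂ * (u t - 1)) t) (x : ℕ) :
    HasDerivAt (fun s => backwardProfile (c₁ / c₂) (u s) x)
      (-c₁ * (backwardProfile (c₁ / c₂) (u t) (x + 1) - backwardProfile (c₁ / c₂) (u t) x)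
        - c₂ * x * (backwardProfile (c₁ / c₂) (u t) (x - 1)
          - backwardProfile (c₁ / c₂) (u t) x)) t := by
  have hprod := (hu.const_mul (-(c₁ / c₂))).exp.mul (hu.pow x)
  refine hprod.congr_deriv ?_
  simp only [backwardProfile, Pi.pow_apply]
  rcases x with _ | n
  · field_simp
    ring
  · simp only [Nat.add_sub_cancel]
    field_simp
    ring

theorem hasDerivAt_one_sub_exp_neg_mul_sub (c T t : ℝ) :
    HasDerivAt (fun s => 1 - exp (-c * (T - s))) (c * ((1 - exp (-c * (T - t))) - 1)) t := by
  have hlin : HasDerivAt (fun s => -c * (T - s)) c t := by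
    simpa using ((hasDerivAt_id t).const_sub T).const_mul (-c)
  refine (hlin.exp.const_sub 1).congr_deriv ?_
  ring

theorem one_sub_exp_neg_mul_sub_pos {c T t : ℝ} (hc : 0 < c) (ht : t < T) :
    0 < 1 - exp (-c * (T - t)) := by
  have hneg : -c * (T - t) < 0 := by nlinarith
  linarith [exp_lt_one_iff.mpr hneg]

end

theorem birth_death_backward_function_general
    (c₁ c₂ T : ℝ) (hc₂ : 0 < c₂)
    (σ : ℕ → ℝ → ℝ)
    (hσ : ∀ x : ℕ, ∀ t : ℝ,
      σ x t = Real.exp (-(c₁ / c₂) * (1 - Real.exp (-c₂ * (T - t))))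
        * (1 - Real.exp (-c₂ * (T - t))) ^ x) :
    (∀ x : ℕ, ∀ t : ℝ, t < T →
        HasDerivAt (σ x)
          (-c₁ * (σ (x + 1) t - σ x t) - c₂ * x * (σ (x - 1) t - σ x t)) t)
      ∧ (σ 0 T = 1 ∧ ∀ x : ℕ, 1 ≤ x → σ x T = 0)
      ∧ (∀ x : ℕ, ∀ t : ℝ, t < T →
          σ (x + 1) t / σ x t = 1 - Real.exp (-c₂ * (T - t))) := by
  obtain rfl : σ = fun x t => backwardProfile (c₁ / c₂) (1 - exp (-c₂ * (T - t))) x :=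
    funext₂ hσ
  refine ⟨fun x t _ => ?_, ⟨by simp, fun x hx => ?_⟩, fun x t ht => ?_⟩
  · exact hasDerivAt_backwardProfile hc₂.ne'
      (hasDerivAt_one_sub_exp_neg_mul_sub c₂ T t) x
  · simpa using backwardProfile_zero_of_ne_zero (c₁ / c₂) (Nat.one_le_iff_ne_zero.mp hx)
  · exact backwardProfile_succ_div _ (one_sub_exp_neg_mul_sub_pos hc₂ ht).ne' x

/-- The backward function `σ(x,t) = e^{−(c₁/c₂)(1−e^{−c₂(T−t)})}(1−e^{−c₂(T−t)})^x`
of the linear birth–death process (birth rate `c₁`, death rate `c₂ x`) solves the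
backward equation with terminal condition the indicator of state `0`, and the
resulting posterior birth-rate scaling factor `σ(x+1,t)/σ(x,t) = 1 − e^{−c₂(T−t)}`
is independent of `x`. -/
theorem birth_death_backward_function
    (c₁ c₂ T : ℝ) (hc₁ : 0 < c₁) (hc₂ : 0 < c₂) (hT : 0 < T)
    (σ : ℕ → ℝ → ℝ)
    (hσ : ∀ x : ℕ, ∀ t : ℝ,
      σ x t = Real.exp (-(c₁ / c₂) * (1 - Real.exp (-c₂ * (T - t))))
        * (1 - Real.exp (-c₂ * (T - t))) ^ x) :
    (∀ x : ℕ, ∀ t : ℝ, t < T →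
        HasDerivAt (σ x)
          (-c₁ * (σ (x + 1) t - σ x t) - c₂ * x * (σ (x - 1) t - σ x t)) t)
      ∧ (σ 0 T = 1 ∧ ∀ x : ℕ, 1 ≤ x → σ x T = 0)
      ∧ (∀ x : ℕ, ∀ t : ℝ, t < T →
          σ (x + 1) t / σ x t = 1 - Real.exp (-c₂ * (T - t))) :=
  birth_death_backward_function_general c₁ c₂ T hc₂ σ hσ
end
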